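/- For every α with 0 ≤ α ≤ 1 and every input distribution Q on X with Q(0) = α, the mutual information is bounded as I(Q;W) ≤ (1−α)·C*, where C* = log s − H(W(1,·)). (Among all input distributions placing mass α on the input 0, the one uniform on X∖{0} maximizes the mutual information.) -/

import Mathlib

open Real BigOperators Finset

/-- Entropy of a finite probability vector, with the convention `0 * log 0 = 0`
(automatic since `Real.log 0 = 0`). -/
noncomputable def ent {n : ℕ} (p : Fin n → ℝ) : ℝ := -∑ y, p y * Real.log (p y)

/-- `Q` is a probability distribution on `Fin n`. -/
def IsProbDist {n : ℕ} (Q : Fin n → ℝ) : Prop := (∀ x, 0 ≤ Q x) ∧ ∑ x, Q x = 1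

/-- Output distribution `(QW)(y) = ∑ x, Q x * W x y`. -/
noncomputable def outDist {r s : ℕ} (Q : Fin r → ℝ) (W : Fin r → Fin s → ℝ) (y : Fin s) : ℝ :=
  ∑ x, Q x * W x y

/-- Mutual information `I(Q;W)`; terms with `Q x * W x y = 0` vanish automatically. -/
noncomputable def mutInfo {r s : ℕ} (Q : Fin r → ℝ) (W : Fin r → Fin s → ℝ) : ℝ :=
  ∑ x, ∑ y, Q x * W x y * Real.log (W x y / outDist Q W y)

/-- Per-input information `I(x;Q,W)`. -/
noncomputable def perInput {r s : ℕ} (x : Fin r) (Q : Fin r → ℝ) (W : Fin r → Fin s → ℝ) : ℝ :=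
  ∑ y, W x y * Real.log (W x y / outDist Q W y)

/-- Channel assumptions: `W` is a transition matrix on inputs `Fin (r+3)` (so `r ≥ 3`)
and outputs `Fin (s+2)` (so `s ≥ 2`), with (i) uniform row at input `0`, (ii) the rows of
nonzero inputs are permutations of the row of input `1`, and (iii) the column sums over
nonzero inputs are constant (weak symmetry of the nonzero-input sub-channel). -/
def PTTOneWay {r s : ℕ} (W : Fin (r + 3) → Fin (s + 2) → ℝ) : Prop :=
  (∀ x y, 0 ≤ W x y) ∧
  (∀ x, ∑ y, W x y = 1) ∧
  (∀ y, W 0 y = 1 / ((s : ℝ) + 2)) ∧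
  (∀ x : Fin (r + 3), x ≠ 0 → ∃ σ : Equiv.Perm (Fin (s + 2)), ∀ y, W x y = W 1 (σ y)) ∧
  (∀ y y' : Fin (s + 2),
    ∑ x ∈ Finset.univ.filter (fun x => x ≠ (0 : Fin (r + 3))), W x y =
    ∑ x ∈ Finset.univ.filter (fun x => x ≠ (0 : Fin (r + 3))), W x y')

/-!
Expanding the logarithm, `I(Q;W) = H(QW) - ∑ₓ Q(x) H(W(x,·))`. The output entropy is at most
`log |Y|` by Jensen's inequality for the concave `t ↦ -t log t`, while the conditional term equals
`α log |Y| + (1 - α) H(W(1,·))` exactly, because row `0` is uniform and every other row is a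
permutation of row `1`.
-/

lemma ent_eq_sum_negMulLog {n : ℕ} (p : Fin n → ℝ) : ent p = ∑ y, negMulLog (p y) := by
  simp [ent, negMulLog_eq_neg]

lemma ent_comp_perm {n : ℕ} (p : Fin n → ℝ) (σ : Equiv.Perm (Fin n)) :
    ent (fun y => p (σ y)) = ent p := by
  simp only [ent_eq_sum_negMulLog]
  exact Equiv.sum_comp σ (fun y => negMulLog (p y))

lemma ent_uniform (n : ℕ) : ent (fun _ : Fin n => (n : ℝ)⁻¹) = log n := by
  rcases n.eq_zero_or_pos with rfl | hn
  · simp [ent]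
  · simp [ent, log_inv]
    field_simp

lemma IsProbDist.ent_le_log_card {n : ℕ} {p : Fin n → ℝ} (hp : IsProbDist p) :
    ent p ≤ log n := by
  have hn : (0 : ℝ) < n := by
    rcases n.eq_zero_or_pos with rfl | hn
    · simpa using hp.2
    · exact_mod_cast hn
  have jensen := concaveOn_negMulLog.le_map_sum (t := univ) (w := fun _ => (n : ℝ)⁻¹) (p := p)
    (fun _ _ => by positivity) (by simp [hn.ne']) (fun y _ => hp.1 y)
  have h_uniform : negMulLog (n : ℝ)⁻¹ = (n : ℝ)⁻¹ * log n := by simp [negMulLog, log_inv]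
  simp only [smul_eq_mul, ← mul_sum, hp.2, mul_one, h_uniform] at jensen
  rw [ent_eq_sum_negMulLog]
  exact (mul_le_mul_iff_of_pos_left (inv_pos.2 hn)).1 jensen

lemma outDist_isProbDist {r s : ℕ} {Q : Fin r → ℝ} {W : Fin r → Fin s → ℝ}
    (hQ : IsProbDist Q) (hW : ∀ x y, 0 ≤ W x y) (hrow : ∀ x, ∑ y, W x y = 1) :
    IsProbDist (outDist Q W) := by
  refine ⟨fun y => sum_nonneg fun x _ => mul_nonneg (hQ.1 x) (hW x y), ?_⟩
  simp only [outDist]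
  rw [sum_comm]
  simp [← mul_sum, hrow, hQ.2]

lemma le_outDist {r s : ℕ} {Q : Fin r → ℝ} {W : Fin r → Fin s → ℝ}
    (hQ : ∀ x, 0 ≤ Q x) (hW : ∀ x y, 0 ≤ W x y) (x : Fin r) (y : Fin s) :
    Q x * W x y ≤ outDist Q W y :=
  single_le_sum (f := fun x => Q x * W x y) (fun i _ => mul_nonneg (hQ i) (hW i y)) (mem_univ x)

lemma mutInfo_eq_ent_outDist_sub {r s : ℕ} {Q : Fin r → ℝ} {W : Fin r → Fin s → ℝ}
    (hQ : ∀ x, 0 ≤ Q x) (hW : ∀ x y, 0 ≤ W x y) :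
    mutInfo Q W = ent (outDist Q W) - ∑ x, Q x * ent (W x) := by
  have hterm : ∀ x y, Q x * W x y * log (W x y / outDist Q W y) =
      Q x * (W x y * log (W x y)) - Q x * W x y * log (outDist Q W y) := by
    intro x y
    rcases (mul_nonneg (hQ x) (hW x y)).eq_or_lt with hQW | hQW
    · rw [← mul_assoc, ← hQW]; simp
    have hW_pos : 0 < W x y := pos_of_mul_pos_right hQW (hQ x)
    rw [log_div hW_pos.ne' (hQW.trans_le (le_outDist hQ hW x y)).ne']
    ring
  have hcross : ∑ x, ∑ y, Q x * W x y * log (outDist Q W y) =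
      ∑ y, outDist Q W y * log (outDist Q W y) := by
    rw [sum_comm]
    simp only [outDist, sum_mul]
  simp only [mutInfo, hterm, sum_sub_distrib, hcross, ent, mul_neg, sum_neg_distrib, ← mul_sum]
  ring

namespace PTTOneWay

variable {r s : ℕ} {W : Fin (r + 3) → Fin (s + 2) → ℝ}

lemma ent_row_zero (hW : PTTOneWay W) : ent (W 0) = log ((s : ℝ) + 2) := by
  have h := ent_uniform (s + 2)
  push_cast at h
  rw [← h]
  congr 1
  funext y
  rw [hW.2.2.1 y, one_div]

lemma ent_row_of_ne_zero (hW : PTTOneWay W) {x : Fin (r + 3)} (hx : x ≠ 0) :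
    ent (W x) = ent (W 1) := by
  obtain ⟨σ, hσ⟩ := hW.2.2.2.1 x hx
  rw [← ent_comp_perm (W 1) σ]
  congr 1
  funext y
  exact hσ y

lemma sum_mul_ent_row (hW : PTTOneWay W) {Q : Fin (r + 3) → ℝ} (hQ : IsProbDist Q) :
    ∑ x, Q x * ent (W x) = Q 0 * log ((s : ℝ) + 2) + (1 - Q 0) * ent (W 1) := by
  have hQ_rest : ∑ x ∈ univ.erase 0, Q x = 1 - Q 0 := by
    rw [← hQ.2, ← add_sum_erase univ Q (mem_univ 0), add_sub_cancel_left]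
  rw [← add_sum_erase univ _ (mem_univ 0), hW.ent_row_zero, ← hQ_rest, sum_mul]
  congr 1
  refine sum_congr rfl fun x hx => ?_
  rw [hW.ent_row_of_ne_zero (ne_of_mem_erase hx)]

end PTTOneWay

theorem stmt7_general (r s : ℕ) (W : Fin (r + 3) → Fin (s + 2) → ℝ) (hW : PTTOneWay W)
    (α : ℝ)
    (Q : Fin (r + 3) → ℝ) (hQ : IsProbDist Q) (hQ0 : Q 0 = α) :
    mutInfo Q W ≤ (1 - α) * (Real.log ((s : ℝ) + 2) - ent (fun y => W 1 y)) := by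
  have hP : ent (outDist Q W) ≤ log ((s : ℝ) + 2) := by
    have h := (outDist_isProbDist hQ hW.1 hW.2.1).ent_le_log_card
    push_cast at h
    exact h
  rw [mutInfo_eq_ent_outDist_sub hQ.1 hW.1, hW.sum_mul_ent_row hQ, hQ0]
  linarith

/-- Among all input distributions with mass `α` on input `0`, the mutual
information is at most `(1 − α) C*` where `C* = log s − H(W(1,·))`. -/
theorem stmt7 (r s : ℕ) (W : Fin (r + 3) → Fin (s + 2) → ℝ) (hW : PTTOneWay W)
    (α : ℝ) (hα0 : 0 ≤ α) (hα1 : α ≤ 1)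
    (Q : Fin (r + 3) → ℝ) (hQ : IsProbDist Q) (hQ0 : Q 0 = α) :
    mutInfo Q W ≤ (1 - α) * (Real.log ((s : ℝ) + 2) - ent (fun y => W 1 y)) :=
  stmt7_general r s W hW α Q hQ hQ0
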